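/- The set of 2×2 unitary matrices W satisfying W = k·W† for some complex scalar k (possibly depending on W) is not closed under matrix multiplication: there exist unitaries W₁, W₂, each satisfying Wᵢ = kᵢ·Wᵢ† for some scalars kᵢ, such that W₁W₂ ≠ k·(W₁W₂)† for every complex scalar k. -/

import Mathlib

/-!
For a unitary `W`, the condition `W = k • Wᴴ` says exactly that `W * W = k • 1`. Both
`σₓ = !![0, 1; 1, 0]` and `!![0, i; 1, 0]` square to scalars, but their product `!![1, 0; 0, i]`
squares to `!![1, 0; 0, -1]`, which is not a scalar.
-/

open Matrix Complex

theorem unitary_eq_smul_star_iff_mul_self_eq_smul_one {R S : Type*} [Monoid R] [StarMul R]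
    [SMul S R] [IsScalarTower S R R] {W : R} (hW : W ∈ unitary R) (k : S) :
    W = k • star W ↔ W * W = k • 1 := by
  constructor
  · intro h
    calc W * W = (k • star W) * W := by rw [← h]
      _ = k • 1 := by rw [smul_mul_assoc, Unitary.star_mul_self_of_mem hW]
  · intro h
    calc W = W * W * star W := by rw [mul_assoc, Unitary.mul_star_self_of_mem hW, mul_one]
      _ = k • star W := by rw [h, smul_mul_assoc, one_mul]

theorem zero_discord_unitaries_not_closed_under_mul :
    ∃ W₁ W₂ : Matrix (Fin 2) (Fin 2) ℂ,
      W₁ ∈ Matrix.unitaryGroup (Fin 2) ℂ ∧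
      W₂ ∈ Matrix.unitaryGroup (Fin 2) ℂ ∧
      (∃ k₁ : ℂ, W₁ = k₁ • W₁ᴴ) ∧
      (∃ k₂ : ℂ, W₂ = k₂ • W₂ᴴ) ∧
      ∀ k : ℂ, W₁ * W₂ ≠ k • (W₁ * W₂)ᴴ := by
  set W₁ : Matrix (Fin 2) (Fin 2) ℂ := !![0, 1; 1, 0]
  set W₂ : Matrix (Fin 2) (Fin 2) ℂ := !![0, I; 1, 0]
  have hW₁ : W₁ ∈ unitaryGroup (Fin 2) ℂ := by
    rw [mem_unitaryGroup_iff, star_eq_conjTranspose, eta_fin_two W₁ᴴ]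
    simp [W₁, one_fin_two]
  have hW₂ : W₂ ∈ unitaryGroup (Fin 2) ℂ := by
    rw [mem_unitaryGroup_iff, star_eq_conjTranspose, eta_fin_two W₂ᴴ]
    simp [W₂, one_fin_two]
  have hW₁₂ : W₁ * W₂ ∈ unitaryGroup (Fin 2) ℂ := mul_mem hW₁ hW₂
  refine ⟨W₁, W₂, hW₁, hW₂, ⟨1, ?_⟩, ⟨I, ?_⟩, fun k h => ?_⟩
  · rw [← star_eq_conjTranspose, unitary_eq_smul_star_iff_mul_self_eq_smul_one hW₁]
    simp [W₁, one_fin_two]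
  · rw [← star_eq_conjTranspose, unitary_eq_smul_star_iff_mul_self_eq_smul_one hW₂]
    simp [W₂, one_fin_two]
  · rw [← star_eq_conjTranspose, unitary_eq_smul_star_iff_mul_self_eq_smul_one hW₁₂] at h
    have h₀₀ : (1 : ℂ) = k := by simpa [W₁, W₂] using congrFun₂ h 0 0
    have h₁₁ : (-1 : ℂ) = k := by simpa [W₁, W₂] using congrFun₂ h 1 1
    norm_num [← h₀₀] at h₁₁
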